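/- arXiv:1107.3019 — 2 statements merged into one kernel-verified Lean document; each statement's English description precedes it below -/
import Mathlib

section
/- Let X_1,…,X_n be a truncation-free collage system over a finite alphabet Σ deriving the string T = val(X_n). Define vOcc : {1,…,n} → ℕ by vOcc(n) = 1 and, for i < n, vOcc(i) = Σ_{j : X_j = X_i X_r} vOcc(j) + Σ_{j : X_j = X_ℓ X_i} vOcc(j) + Σ_{j : X_j = (X_i)^p} p·vOcc(j), where an assignment X_j = X_i X_i contributes 2·vOcc(j). Then for every integer q ≥ 2 and every string P over Σ with |P| = q: |Occ(T,P)| = Σ_{i : X_i = X_ℓ X_r} vOcc(i)·|Occ(suf(val(X_ℓ),q−1)·pre(val(X_r),q−1), P)| + Σ_{i : X_i = (X_s)^p, |val(X_s)| ≥ q} vOcc(i)·(p−1)·|Occ(suf(val(X_s),q−1)·pre(val(X_s),q−1), P)| + Σ_{i : X_i = (X_s)^p, |val(X_s)| < q} vOcc(i) · Σ_{j ∈ Occ(val(X_s)·pre(val(X_s)^{p−1}, q−1), P)} |{ m ∈ ℕ : j + m·|val(X_s)| + q − 1 ≤ p·|val(X_s)| }|. -/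
/-! Every occurrence of `P` in `T = val(X_n)` is born at a unique node of the derivation tree:
the lowest node whose string contains it. Since `|P| ≥ 2`, that node is a concatenation `X_ℓ X_r`
or a repetition `(X_s)^p`, and the occurrence straddles a boundary between two of its blocks.
Splitting `u ++ v` gives `Occ(u ++ v) = Occ(u) + Occ(v) + Occ(suf u ++ pre v)`; for a repetition
with a long period the `p - 1` boundaries behave alike, while for a short period one counts the
occurrences in `w^p` by their start modulo `|w|`. So with `x_i = |Occ(val X_i, P)|`, `A_{ij}` the
number of references of `X_i` to `X_j` and `c_i` the crossing count of `X_i`, we have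
`x = A x + c`, while `vOcc = vOcc A + e_n`; hence `x_n = vOcc ⬝ c`. -/

/-- `Occ T P` is the set of (1-based) occurrence positions of `P` in `T`:
`{ i : 1 ≤ i ≤ |T|−|P|+1 and T[i:i+|P|−1] = P }`. -/
def Occ {α : Type*} [DecidableEq α] (T P : List α) : Finset ℕ :=
  (Finset.Icc 1 (T.length - P.length + 1)).filter
    (fun i => (T.drop (i - 1)).take P.length = P)

/-- `pre T k = T[1:min(k,|T|)]`, the prefix of `T` of length at most `k`. -/
def pre {α : Type*} (T : List α) (k : ℕ) : List α := T.take k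

/-- `suf T k = T[|T|−min(k,|T|)+1:|T|]`, the suffix of `T` of length at most `k`. -/
def suf {α : Type*} (T : List α) (k : ℕ) : List α := T.drop (T.length - k)

/-- `listPow w p` is the `p`-fold concatenation `w^p`. -/
def listPow {α : Type*} (w : List α) : ℕ → List α
  | 0 => []
  | p + 1 => w ++ listPow w p

/-- An assignment of a truncation-free collage system with variables indexed by `Fin n`:
a terminal symbol, a concatenation of two variables, or a repetition `(X_s)^p`. -/
inductive CExpr (α : Type*) (n : ℕ) where
  | term : α → CExpr α n
  | concat : Fin n → Fin n → CExpr α n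
  | rep : Fin n → ℕ → CExpr α n

/-- How many times the assignment `e` references variable `i`
(`X_j = X_i X_i` counts twice, and `X_j = (X_i)^p` counts `p` times). -/
def CExpr.refCount {α : Type*} {n : ℕ} (e : CExpr α n) (i : Fin n) : ℕ :=
  match e with
  | .term _ => 0
  | .concat l r => (if l = i then 1 else 0) + (if r = i then 1 else 0)
  | .rep s p => if s = i then p else 0


section ListPow

variable {α : Type*}

theorem listPow_length (w : List α) (p : ℕ) : (listPow w p).length = p * w.length := by
  induction p with
  | zero => simp [listPow]
  | succ p ih => simp [listPow, ih, Nat.succ_mul, Nat.add_comm]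

theorem listPow_add (w : List α) (a b : ℕ) : listPow w (a + b) = listPow w a ++ listPow w b := by
  induction a with
  | zero => simp [listPow]
  | succ a ih => rw [Nat.succ_add, listPow, listPow, ih, List.append_assoc]

theorem drop_listPow_of_le {w : List α} {m p : ℕ} (h : m ≤ p) :
    (listPow w p).drop (m * w.length) = listPow w (p - m) := by
  rw [← Nat.add_sub_cancel' h, listPow_add, Nat.add_sub_cancel_left,
    ← listPow_length w m, List.drop_left]

theorem take_drop_append_of_le {A B : List α} {i q : ℕ} (h : i + q ≤ A.length) :
    ((A ++ B).drop i).take q = (A.drop i).take q := by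
  rw [List.drop_append_of_le_length (by omega),
    List.take_append_of_le_length (by simp only [List.length_drop]; omega)]

theorem take_drop_listPow_add_mul {w : List α} {p r m q : ℕ} (hq : 0 < q)
    (h : r + m * w.length + q ≤ p * w.length) :
    ((listPow w p).drop (r + m * w.length)).take q = ((listPow w p).drop r).take q := by
  have hm : m ≤ p := by
    have : m * w.length < p * w.length := by omega
    exact (Nat.lt_of_mul_lt_mul_right this).le
  have hfit : r + q ≤ (listPow w (p - m)).length := by
    rw [listPow_length, Nat.sub_mul]; omega
  rw [Nat.add_comm r, ← List.drop_drop, drop_listPow_of_le hm]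
  conv_rhs => rw [← Nat.sub_add_cancel hm, listPow_add, take_drop_append_of_le hfit]

theorem take_drop_take_drop {T : List α} {d k i q : ℕ} (h : i + q ≤ k) :
    (((T.drop d).take k).drop i).take q = (T.drop (d + i)).take q := by
  rw [List.drop_take, List.take_take, List.drop_drop, min_eq_left (by omega)]

theorem suf_append_pre_eq_take_drop (u v : List α) (k : ℕ) :
    suf u k ++ pre v k = ((u ++ v).drop (u.length - k)).take ((suf u k).length + k) := by
  rw [List.drop_append_of_le_length (by omega), List.take_append]
  simp [suf, pre]

end ListPow

section Occurrences

variable {α : Type*} [DecidableEq α]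

def Occ₀ (T P : List α) : Finset ℕ :=
  (Finset.range (T.length + 1 - P.length)).filter fun i => (T.drop i).take P.length = P

theorem mem_occ₀ {T P : List α} {i : ℕ} :
    i ∈ Occ₀ T P ↔ i + P.length ≤ T.length ∧ (T.drop i).take P.length = P := by
  simp only [Occ₀, Finset.mem_filter, Finset.mem_range]
  exact and_congr_left fun _ => by omega

theorem occ₀_eq_empty_of_length_lt {T P : List α} (h : T.length < P.length) : Occ₀ T P = ∅ := by
  simp [Occ₀, Nat.sub_eq_zero_of_le h]

theorem occ_eq_map_occ₀ (T P : List α) : Occ T P = (Occ₀ T P).map (addRightEmbedding 1) := by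
  ext i
  simp only [Occ, Finset.mem_filter, Finset.mem_Icc, Finset.mem_map, mem_occ₀,
    addRightEmbedding_apply]
  constructor
  · rintro ⟨hi, hocc⟩
    have hlen := congrArg List.length hocc
    simp only [List.length_take, List.length_drop] at hlen
    exact ⟨i - 1, ⟨by omega, hocc⟩, by omega⟩
  · rintro ⟨i, ⟨hi, hocc⟩, rfl⟩
    exact ⟨by omega, by simpa using hocc⟩

theorem card_occ (T P : List α) : (Occ T P).card = (Occ₀ T P).card := by
  rw [occ_eq_map_occ₀, Finset.card_map]

theorem mem_occ₀_window {T W P : List α} {d k j : ℕ} (hP : P ≠ []) (hW : W = (T.drop d).take k) :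
    j ∈ Occ₀ W P ↔ d + j ∈ Occ₀ T P ∧ j + P.length ≤ k := by
  subst hW
  have hq : 0 < P.length := List.length_pos_iff.mpr hP
  simp only [mem_occ₀, List.length_take, List.length_drop]
  constructor
  · rintro ⟨hj, hocc⟩
    rw [take_drop_take_drop (by omega)] at hocc
    exact ⟨⟨by omega, hocc⟩, by omega⟩
  · rintro ⟨⟨hj, hocc⟩, hk⟩
    rw [take_drop_take_drop hk]
    exact ⟨by omega, hocc⟩

theorem card_occ₀_window {T W P : List α} {d k : ℕ} (hP : P ≠ []) (hW : W = (T.drop d).take k) :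
    (Occ₀ W P).card = ((Occ₀ T P).filter fun i => d ≤ i ∧ i + P.length ≤ d + k).card := by
  rw [← Finset.card_map (addLeftEmbedding d)]
  congr 1
  ext i
  simp only [Finset.mem_map, Finset.mem_filter, addLeftEmbedding_apply, mem_occ₀_window hP hW]
  constructor
  · rintro ⟨j, ⟨hocc, hj⟩, rfl⟩
    exact ⟨hocc, by omega, by omega⟩
  · rintro ⟨hocc, hd, hi⟩
    exact ⟨i - d, ⟨by rwa [Nat.add_sub_cancel' hd], by omega⟩, by omega⟩

theorem card_occ₀_append (u v P : List α) (hP : P ≠ []) :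
    (Occ₀ (u ++ v) P).card = (Occ₀ u P).card + (Occ₀ v P).card
      + (Occ₀ (suf u (P.length - 1) ++ pre v (P.length - 1)) P).card := by
  have hq : 0 < P.length := List.length_pos_iff.mpr hP
  rw [card_occ₀_window (T := u ++ v) (W := u) (d := 0) (k := u.length) hP (by simp),
    card_occ₀_window (T := u ++ v) (W := v) (d := u.length) (k := v.length) hP (by simp),
    card_occ₀_window hP (suf_append_pre_eq_take_drop u v _), Finset.card_filter, Finset.card_filter,
    Finset.card_filter, ← Finset.sum_add_distrib, ← Finset.sum_add_distrib,
    Finset.card_eq_sum_ones]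
  refine Finset.sum_congr rfl fun i hi => ?_
  have hi := (mem_occ₀.mp hi).1
  simp only [suf, List.length_drop, List.length_append] at hi ⊢
  split_ifs <;> omega

theorem card_occ_append (u v P : List α) (hP : P ≠ []) :
    (Occ (u ++ v) P).card = (Occ u P).card + (Occ v P).card
      + (Occ (suf u (P.length - 1) ++ pre v (P.length - 1)) P).card := by
  simp only [card_occ, card_occ₀_append u v P hP]

end Occurrences

section OccurrencesInPowers

variable {α : Type*} [DecidableEq α]

theorem card_occ_eq_zero_of_length_lt {T P : List α} (h : T.length < P.length) :
    (Occ T P).card = 0 := by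
  rw [card_occ, occ₀_eq_empty_of_length_lt h, Finset.card_empty]

theorem card_occ_listPow_of_length_le {w P : List α} (hP : P ≠ []) (hw : P.length ≤ w.length)
    (p : ℕ) :
    (Occ (listPow w p) P).card = p * (Occ w P).card
      + (p - 1) * (Occ (suf w (P.length - 1) ++ pre w (P.length - 1)) P).card := by
  have hq : 0 < P.length := List.length_pos_iff.mpr hP
  induction p with
  | zero => simpa [listPow] using card_occ_eq_zero_of_length_lt (T := []) hq
  | succ p ih =>
    rw [listPow, card_occ_append _ _ _ hP, ih]
    rcases p with _ | p
    · have hshort : (suf w (P.length - 1) ++ pre [] (P.length - 1)).length < P.length := by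
        simp only [suf, pre, List.take_nil, List.append_nil, List.length_drop]
        omega
      simp [listPow, card_occ_eq_zero_of_length_lt hshort]
    · have hpre : pre (listPow w (p + 1)) (P.length - 1) = pre w (P.length - 1) :=
        List.take_append_of_le_length (l₁ := w) (by omega)
      rw [hpre, Nat.add_sub_cancel, Nat.add_sub_cancel]
      ring

theorem add_mul_mem_occ₀_listPow {w P : List α} {p r m : ℕ} (hP : P ≠ []) :
    r + m * w.length ∈ Occ₀ (listPow w p) P ↔
      r ∈ Occ₀ (listPow w p) P ∧ r + m * w.length + P.length ≤ p * w.length := by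
  have hq : 0 < P.length := List.length_pos_iff.mpr hP
  simp only [mem_occ₀, listPow_length]
  constructor
  · rintro ⟨hfit, hocc⟩
    rw [take_drop_listPow_add_mul hq hfit] at hocc
    exact ⟨⟨by omega, hocc⟩, hfit⟩
  · rintro ⟨⟨-, hocc⟩, hfit⟩
    rw [take_drop_listPow_add_mul hq hfit]
    exact ⟨hfit, hocc⟩

/-- Group the occurrences by their start modulo `|w|`: the residues `r < |w|` that start an
occurrence are those of the prefix `w · pre(w^(p-1), |P| - 1)` of `w^p`. -/
theorem card_occ₀_listPow_of_length_lt {w P : List α} (hw : w.length < P.length) (p : ℕ) :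
    (Occ₀ (listPow w p) P).card =
      ∑ r ∈ Occ₀ (w ++ pre (listPow w (p - 1)) (P.length - 1)) P,
        {m : ℕ | r + m * w.length + P.length ≤ p * w.length}.ncard := by
  have hP : P ≠ [] := List.length_pos_iff.mp (by omega)
  rcases p with _ | p
  · have hnil : ([] : List α).length < P.length := List.length_pos_iff.mpr hP
    simp only [listPow, Nat.zero_sub, pre, List.take_nil, List.append_nil,
      occ₀_eq_empty_of_length_lt hw, occ₀_eq_empty_of_length_lt hnil, Finset.card_empty,
      Finset.sum_empty]
  have hprefix : w ++ pre (listPow w p) (P.length - 1) =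
      ((listPow w (p + 1)).drop 0).take (w.length + (P.length - 1)) := by
    simp [listPow, pre, List.take_append]
  have hR : ∀ r, r ∈ Occ₀ (w ++ pre (listPow w p) (P.length - 1)) P ↔
      r ∈ Occ₀ (listPow w (p + 1)) P ∧ r < w.length := fun r => by
    rw [mem_occ₀_window hP hprefix, Nat.zero_add]
    exact and_congr_right fun _ => by omega
  rw [Nat.add_sub_cancel, Finset.card_eq_sum_card_fiberwise (f := (· % w.length))]
  · refine Finset.sum_congr rfl fun r hr => ?_
    obtain ⟨hocc, hr⟩ := (hR r).mp hr
    have hinj : Function.Injective fun m => r + m * w.length :=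
      fun a b h => Nat.eq_of_mul_eq_mul_right (by omega) (Nat.add_left_cancel h)
    rw [← Set.ncard_coe_finset]
    conv_rhs => rw [← Set.ncard_image_of_injective _ hinj]
    congr 1
    ext i
    simp only [Finset.coe_filter, Set.mem_ofPred_eq, Set.mem_image]
    constructor
    · rintro ⟨hi, rfl⟩
      refine ⟨i / w.length, ?_, Nat.mod_add_div' i w.length⟩
      rw [← Nat.mod_add_div' i w.length, add_mul_mem_occ₀_listPow hP] at hi
      exact hi.2
    · rintro ⟨m, hm, rfl⟩
      exact ⟨(add_mul_mem_occ₀_listPow hP).mpr ⟨hocc, hm⟩,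
        by rw [Nat.add_mul_mod_self_right, Nat.mod_eq_of_lt hr]⟩
  · intro i hi
    rw [Finset.mem_coe] at hi
    have hw0 : 0 < w.length := by
      have hfit := (mem_occ₀.mp hi).1
      rw [listPow_length] at hfit
      exact Nat.pos_of_ne_zero fun h => by rw [h] at hfit; omega
    rw [← Nat.mod_add_div' i w.length, add_mul_mem_occ₀_listPow hP] at hi
    exact (hR _).mpr ⟨hi.1, Nat.mod_lt i hw0⟩

theorem card_occ_listPow_of_length_lt {w P : List α} (hw : w.length < P.length) (p : ℕ) :
    (Occ (listPow w p) P).card =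
      ∑ j ∈ Occ (w ++ pre (listPow w (p - 1)) (P.length - 1)) P,
        {m : ℕ | j + m * w.length + P.length - 1 ≤ p * w.length}.ncard := by
  rw [card_occ, card_occ₀_listPow_of_length_lt hw, occ_eq_map_occ₀, Finset.sum_map]
  refine Finset.sum_congr rfl fun r _ => ?_
  congr 1
  ext m
  simp only [addRightEmbedding_apply, Set.mem_ofPred_eq]
  omega

end OccurrencesInPowers

theorem apply_eq_dotProduct_of_eq_mulVec_add {ι R : Type*} [Fintype ι] [DecidableEq ι]
    [Semiring R] [IsLeftCancelAdd R] {A : Matrix ι ι R} {x c w : ι → R} {i₀ : ι}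
    (hx : x = A.mulVec x + c) (hw : Matrix.vecMul w A + Pi.single i₀ 1 = w) : x i₀ = w ⬝ᵥ c := by
  have hw' : w ⬝ᵥ x = Matrix.vecMul w A ⬝ᵥ x + x i₀ := by
    conv_lhs => rw [← hw]
    rw [add_dotProduct, single_dotProduct, one_mul]
  have hx' : w ⬝ᵥ x = Matrix.vecMul w A ⬝ᵥ x + w ⬝ᵥ c := by
    conv_lhs => rw [hx]
    rw [dotProduct_add, Matrix.dotProduct_mulVec]
  exact add_left_cancel (hw'.symm.trans hx')

namespace CExpr

variable {α : Type*} {n : ℕ}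

def WellFormedAt (e : CExpr α n) (i : Fin n) : Prop :=
  match e with
  | .term _ => True
  | .concat l r => l < i ∧ r < i
  | .rep s p => s < i ∧ 2 ≤ p

def eval (val : Fin n → List α) : CExpr α n → List α
  | .term a => [a]
  | .concat l r => val l ++ val r
  | .rep s p => listPow (val s) p

/-- The number of occurrences of `P` in `e.eval val` that lie in no single block `val l`,
`val r`, `val s` of `e`. -/
noncomputable def crossingOccCount [DecidableEq α] (val : Fin n → List α) (P : List α) :
    CExpr α n → ℕ
  | .term _ => 0
  | .concat l r => (Occ (suf (val l) (P.length - 1) ++ pre (val r) (P.length - 1)) P).card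
  | .rep s p =>
    if P.length ≤ (val s).length then
      (p - 1) * (Occ (suf (val s) (P.length - 1) ++ pre (val s) (P.length - 1)) P).card
    else
      ∑ j ∈ Occ (val s ++ pre (listPow (val s) (p - 1)) (P.length - 1)) P,
        {m : ℕ | j + m * (val s).length + P.length - 1 ≤ p * (val s).length}.ncard

theorem refCount_eq_zero_of_wellFormedAt {e : CExpr α n} {i j : Fin n} (he : e.WellFormedAt j)
    (hji : j ≤ i) : e.refCount i = 0 := by
  cases e with
  | term => rfl
  | concat l r => simp [refCount, (he.1.trans_le hji).ne, (he.2.trans_le hji).ne]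
  | rep s p => simp [refCount, (he.1.trans_le hji).ne]

theorem card_occ_eval [DecidableEq α] {P : List α} (hP : 2 ≤ P.length) (val : Fin n → List α)
    (e : CExpr α n) :
    (Occ (e.eval val) P).card =
      ∑ k, e.refCount k * (Occ (val k) P).card + e.crossingOccCount val P := by
  have hPne : P ≠ [] := List.length_pos_iff.mp (by omega)
  cases e with
  | term a =>
    have hshort : [a].length < P.length := by simp only [List.length_singleton]; omega
    simp [eval, refCount, crossingOccCount, card_occ_eq_zero_of_length_lt hshort]
  | concat l r =>
    rw [eval, card_occ_append _ _ _ hPne]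
    simp only [refCount, crossingOccCount, add_mul, ite_mul, one_mul, zero_mul,
      Finset.sum_add_distrib, Finset.sum_ite_eq, Finset.mem_univ, if_true]
  | rep s p =>
    simp only [eval, crossingOccCount, refCount, ite_mul, zero_mul, Finset.sum_ite_eq,
      Finset.mem_univ, if_true]
    split_ifs with hs
    · rw [card_occ_listPow_of_length_le hPne hs]
    · rw [card_occ_listPow_of_length_lt (by omega),
        card_occ_eq_zero_of_length_lt (T := val s) (by omega), mul_zero, zero_add]

end CExpr

/-- `q`-gram frequencies on a truncation-free collage system.
`expr` gives the assignments (each referring only to earlier variables, with exponents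
`p ≥ 2` for repetitions), `val` their derived strings, `T = val(X_n)`, and `vOcc` counts
occurrences of each variable in the derivation tree: `vOcc(n) = 1` and for `i < n`,
`vOcc(i) = Σ_{j : X_j = X_i X_r} vOcc(j) + Σ_{j : X_j = X_ℓ X_i} vOcc(j)
 + Σ_{j : X_j = (X_i)^p} p·vOcc(j)`.
Then `|Occ(T,P)|` equals the sum over all variables of: for `X_i = X_ℓ X_r`,
`vOcc(i)·|Occ(suf(val(X_ℓ),q−1)·pre(val(X_r),q−1),P)|`; for `X_i = (X_s)^p` with
`|val(X_s)| ≥ q`, `vOcc(i)·(p−1)·|Occ(suf(val(X_s),q−1)·pre(val(X_s),q−1),P)|`; and for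
`X_i = (X_s)^p` with `|val(X_s)| < q`,
`vOcc(i)·Σ_{j ∈ Occ(val(X_s)·pre(val(X_s)^{p−1},q−1),P)}
  |{ m ∈ ℕ : j + m·|val(X_s)| + q − 1 ≤ p·|val(X_s)| }|`. -/
theorem qgram_frequencies_on_truncation_free_collage {α : Type*} [DecidableEq α]
    (n : ℕ) (hn : 0 < n)
    (expr : Fin n → CExpr α n) (val : Fin n → List α) (vOcc : Fin n → ℕ)
    (hwf : ∀ i : Fin n, match expr i with
      | .term _ => True
      | .concat l r => l < i ∧ r < i
      | .rep s p => s < i ∧ 2 ≤ p)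
    (hval : ∀ i : Fin n, val i = match expr i with
      | .term a => [a]
      | .concat l r => val l ++ val r
      | .rep s p => listPow (val s) p)
    (hlast : vOcc ⟨n - 1, by omega⟩ = 1)
    (hvOcc : ∀ i : Fin n, (i : ℕ) + 1 < n →
      vOcc i = ∑ j : Fin n, vOcc j * (expr j).refCount i)
    (q : ℕ) (hq : 2 ≤ q) (P : List α) (hP : P.length = q) :
    (Occ (val ⟨n - 1, by omega⟩) P).card =
      ∑ i : Fin n, vOcc i *
        (match expr i with
         | .term _ => 0
         | .concat l r =>
            (Occ (suf (val l) (q - 1) ++ pre (val r) (q - 1)) P).card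
         | .rep s p =>
            if q ≤ (val s).length then
              (p - 1) * (Occ (suf (val s) (q - 1) ++ pre (val s) (q - 1)) P).card
            else
              ∑ j ∈ Occ (val s ++ pre (listPow (val s) (p - 1)) (q - 1)) P,
                {m : ℕ | j + m * (val s).length + q - 1 ≤ p * (val s).length}.ncard) := by
  subst hP
  set last : Fin n := ⟨n - 1, by omega⟩
  have hlocal : ∀ i, (Occ (val i) P).card =
      ∑ k, (expr i).refCount k * (Occ (val k) P).card + (expr i).crossingOccCount val P :=
    fun i => by rw [hval i]; exact (expr i).card_occ_eval hq val
  have hrefLast : ∀ j, (expr j).refCount last = 0 := fun j =>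
    (expr j).refCount_eq_zero_of_wellFormedAt (hwf j) (Fin.le_def.mpr (by simp only [last]; omega))
  have hadjoint :
      Matrix.vecMul vOcc (Matrix.of fun j i => (expr j).refCount i) + Pi.single last 1 = vOcc := by
    funext i
    simp only [Pi.add_apply, Matrix.vecMul, dotProduct, Matrix.of_apply]
    by_cases hi : i = last
    · simp [hi, hrefLast, hlast]
    · have : (i : ℕ) ≠ n - 1 := fun h => hi (Fin.ext h)
      rw [Pi.single_eq_of_ne hi, add_zero, hvOcc i (by omega)]
  exact apply_eq_dotProduct_of_eq_mulVec_add (funext hlocal) hadjoint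
end

section
/- Let x and y be strings over a finite alphabet Σ, let q ≥ 2 be an integer, let P be a string over Σ with |P| = q, and let a, b be integers with 0 ≤ a < |x| and 0 ≤ b < |y|. Let t = suf(x, q−1)·pre(y, q−1), L = max(1, a − max(0, |x| − q + 1) + 1), and R = min(q−1, |x|) − max(0, b + q − 1 − |y|). Then the number of occurrences of P in drop(x, a)·pre(y, |y| − b) that cross the boundary between the two parts, i.e., |{ i ∈ Occ(drop(x,a)·pre(y,|y|−b), P) : i ≤ |x| − a < i + q − 1 }|, equals |{ j ∈ Occ(t, P) : L ≤ j ≤ R }|. -/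
/-! Both windows `drop(x,a)·pre(y,|y|−b)` and `t` are factors of `x ++ y`, so an occurrence at
position `i` of a window starting at offset `s` is the occurrence at position `s + i` of `x ++ y`.
Both sides therefore count the occurrences of `P` in `x ++ y` that straddle the end of `x` and
fit in the truncated right part; the bijection is a shift by `a − (|x| − (q − 1))`. -/

section Occurrences

variable {α : Type*} [DecidableEq α] {T P : List α} {i : ℕ}

theorem mem_Occ_iff (hP : P ≠ []) :
    i ∈ Occ T P ↔ 1 ≤ i ∧ (T.drop (i - 1)).take P.length = P := by
  have hP0 : 0 < P.length := List.length_pos_iff.mpr hP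
  simp only [Occ, Finset.mem_filter, Finset.mem_Icc]
  refine ⟨fun ⟨⟨h1, _⟩, h⟩ => ⟨h1, h⟩, fun ⟨h1, h⟩ => ⟨⟨h1, ?_⟩, h⟩⟩
  have hlen := congrArg List.length h
  simp only [List.length_take, List.length_drop] at hlen
  omega

theorem mem_Occ_drop_take_iff (hP : P ≠ []) (s e : ℕ) :
    i ∈ Occ ((T.take e).drop s) P ↔ 1 ≤ i ∧ s + i + P.length ≤ e + 1 ∧ s + i ∈ Occ T P := by
  have hP0 : 0 < P.length := List.length_pos_iff.mpr hP
  rw [mem_Occ_iff hP, mem_Occ_iff hP, List.drop_drop, List.drop_take, List.take_take]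
  constructor
  · rintro ⟨hi, h⟩
    have hlen := congrArg List.length h
    simp only [List.length_take, List.length_drop] at hlen
    rw [min_eq_left (by omega)] at h
    exact ⟨hi, by omega, by omega, by rwa [show s + i - 1 = s + (i - 1) by omega]⟩
  · rintro ⟨hi, he, -, h⟩
    rw [min_eq_left (by omega), show s + (i - 1) = s + i - 1 by omega]
    exact ⟨hi, h⟩

end Occurrences

theorem drop_append_take_eq_drop_take_append {α : Type*} {x y : List α} {s : ℕ}
    (hs : s ≤ x.length) (c : ℕ) :
    x.drop s ++ y.take c = ((x ++ y).take (x.length + c)).drop s := by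
  rw [List.take_length_add_append, List.drop_append_of_le_length hs]

theorem truncated_crossing_count_general {α : Type*} [DecidableEq α]
    (x y : List α) (q : ℕ) (hq : 2 ≤ q) (P : List α) (hP : P.length = q)
    (a b : ℕ) (ha : a < x.length) :
    ((Occ (x.drop a ++ pre y (y.length - b)) P).filter
        (fun i => i ≤ x.length - a ∧ x.length - a < i + q - 1)).card =
      ((Occ (suf x (q - 1) ++ pre y (q - 1)) P).filter
        (fun j => max 1 (a - (x.length + 1 - q) + 1) ≤ j ∧
          j ≤ min (q - 1) x.length - (b + q - 1 - y.length))).card := by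
  have hP0 : P ≠ [] := List.ne_nil_of_length_pos (by omega)
  rw [pre, pre, suf, drop_append_take_eq_drop_take_append ha.le,
    drop_append_take_eq_drop_take_append (Nat.sub_le _ _)]
  set o := x.length - (q - 1)
  refine Finset.card_nbij' (· + a - o) (· + o - a) ?_ ?_ ?_ ?_ <;> intro i hi <;>
    simp only [Finset.mem_coe, Finset.mem_filter, mem_Occ_drop_take_iff hP0] at hi ⊢
  · refine ⟨⟨by omega, by omega, ?_⟩, by omega, by omega⟩
    rw [show o + (i + a - o) = a + i by omega]; exact hi.1.2.2
  · refine ⟨⟨by omega, by omega, ?_⟩, by omega, by omega⟩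
    rw [show a + (i + o - a) = o + i by omega]; exact hi.1.2.2
  · omega
  · omega

/-- occurrences of a `q`-gram `P` in `drop(x,a)·pre(y,|y|−b)` that cross the
boundary between the two parts are counted by the occurrences `j` of `P` in
`t = suf(x,q−1)·pre(y,q−1)` with `L ≤ j ≤ R`, where
`L = max(1, a − max(0,|x|−q+1) + 1)` and `R = min(q−1,|x|) − max(0, b+q−1−|y|)`
(in `ℕ`, `max(0,|x|−q+1) = |x|+1−q` and `max(0,b+q−1−|y|) = b+q−1−|y|`). -/
theorem truncated_crossing_count {α : Type*} [Fintype α] [DecidableEq α]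
    (x y : List α) (q : ℕ) (hq : 2 ≤ q) (P : List α) (hP : P.length = q)
    (a b : ℕ) (ha : a < x.length) (hb : b < y.length) :
    ((Occ (x.drop a ++ pre y (y.length - b)) P).filter
        (fun i => i ≤ x.length - a ∧ x.length - a < i + q - 1)).card =
      ((Occ (suf x (q - 1) ++ pre y (q - 1)) P).filter
        (fun j => max 1 (a - (x.length + 1 - q) + 1) ≤ j ∧
          j ≤ min (q - 1) x.length - (b + q - 1 - y.length))).card :=
  truncated_crossing_count_general x y q hq P hP a b ha
end
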